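/- arXiv:2403.17956 — 4 statements merged into one kernel-verified Lean document; each statement's English description precedes it below -/
import Mathlib

section
/- If (a_n)_{n≥0} is a sequence in a monoid such that a_{n+1}^2 = a_n for all n ≥ 0, then the assignment q(t) = a_0^{t_0} · a_{m_1} · ... · a_{m_j}, where t = t_0 + 2^{-m_1} + ... + 2^{-m_j} is the binary expansion of a positive dyadic rational t (with integers t_0 ≥ 0 and 1 ≤ m_1 < ... < m_j), defines a semigroup homomorphism from the additive semigroup of positive dyadic rationals: q(s+t) = q(s)·q(t) for all positive dyadic rationals s, t. -/
/-!
Write every dyadic rational as `k / 2 ^ m` and send it to `a m ^ k`. Since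
`a (m + d) ^ 2 ^ d = a m`, the value does not change when `k / 2 ^ m` is rewritten as
`(k * 2 ^ d) / 2 ^ (m + d)`, so the map is well defined; and after bringing `s` and `t`
to a common denominator `2 ^ n`, additivity is just `a n ^ (k + l) = a n ^ k * a n ^ l`.
-/

/-- A positive dyadic rational: a rational of the form `k / 2^m` with `k, m` positive
(equivalently `k` positive, `m` a natural number). -/
def IsPosDyadic (t : ℚ) : Prop := ∃ k m : ℕ, 0 < k ∧ t = (k : ℚ) / 2 ^ m

section Dyadic

variable {M : Type*} [Monoid M] {a : ℕ → M}

theorem pow_two_pow_of_sq_eq (ha : ∀ n, a (n + 1) ^ 2 = a n) (m d : ℕ) :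
    a (m + d) ^ 2 ^ d = a m := by
  induction d with
  | zero => simp
  | succ d ih => rw [← ih, ← ha (m + d), ← pow_mul, ← pow_succ']; rfl

theorem pow_eq_pow_of_natCast_div_two_pow_eq (ha : ∀ n, a (n + 1) ^ 2 = a n) {k l m n : ℕ}
    (h : (k : ℚ) / 2 ^ m = l / 2 ^ n) : a m ^ k = a n ^ l := by
  wlog hmn : m ≤ n generalizing k l m n
  · exact (this h.symm (le_of_not_ge hmn)).symm
  obtain ⟨d, rfl⟩ := Nat.exists_eq_add_of_le hmn
  have hl : l = k * 2 ^ d := by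
    rw [div_eq_div_iff (by positivity) (by positivity), pow_add, ← mul_assoc,
      mul_right_comm] at h
    exact_mod_cast (mul_right_cancel₀ (pow_ne_zero m two_ne_zero) h).symm
  rw [hl, pow_mul', pow_two_pow_of_sq_eq ha]

/-- Junk unless `t` is a nonnegative dyadic rational, i.e. `t.den` is a power of `2`. -/
def dyadicPow (a : ℕ → M) (t : ℚ) : M :=
  a (Nat.log 2 t.den) ^ t.num.toNat

theorem dyadicPow_natCast_div_two_pow (ha : ∀ n, a (n + 1) ^ 2 = a n) (k m : ℕ) :
    dyadicPow a ((k : ℚ) / 2 ^ m) = a m ^ k := by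
  set t : ℚ := (k : ℚ) / 2 ^ m
  have hden : t.den ∣ 2 ^ m := by
    have : (t.den : ℤ) ∣ 2 ^ m := by
      simpa [t, Rat.divInt_eq_div] using Rat.den_dvd (k : ℤ) (2 ^ m)
    exact_mod_cast this
  obtain ⟨j, -, hj⟩ := (Nat.dvd_prime_pow Nat.prime_two).mp hden
  have hnum : (t.num.toNat : ℚ) = t.num := by
    exact_mod_cast Int.toNat_of_nonneg (Rat.num_nonneg.mpr (by positivity))
  have ht : (t.num.toNat : ℚ) / 2 ^ j = k / 2 ^ m := by
    have h2j : (2 : ℚ) ^ j = t.den := by rw [hj]; push_cast; rfl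
    rw [hnum, h2j, Rat.num_div_den]
  rw [dyadicPow, hj, Nat.log_pow one_lt_two]
  exact pow_eq_pow_of_natCast_div_two_pow_eq ha ht

end Dyadic

theorem IsPosDyadic.exists_common_two_pow_denom {s t : ℚ} (hs : IsPosDyadic s)
    (ht : IsPosDyadic t) : ∃ k l n : ℕ, s = (k : ℚ) / 2 ^ n ∧ t = (l : ℚ) / 2 ^ n := by
  obtain ⟨k, m, -, rfl⟩ := hs
  obtain ⟨l, n, -, rfl⟩ := ht
  refine ⟨k * 2 ^ n, l * 2 ^ m, m + n, ?_, ?_⟩ <;>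
    · push_cast
      rw [div_eq_div_iff (by positivity) (by positivity)]
      ring

/-- If `(a n)` is a sequence in a monoid with `a (n+1) ^ 2 = a n` for all `n`, then the
assignment determined on binary expansions by `q (k / 2^m) = (a m) ^ k` is well defined on
positive dyadic rationals and is a semigroup homomorphism: `q (s + t) = q s * q t`. -/
theorem stmt0 {M : Type*} [Monoid M] (a : ℕ → M) (ha : ∀ n : ℕ, (a (n + 1)) ^ 2 = a n) :
    ∃ q : ℚ → M,
      (∀ k m : ℕ, 0 < k → q ((k : ℚ) / 2 ^ m) = (a m) ^ k) ∧
      (∀ s t : ℚ, IsPosDyadic s → IsPosDyadic t → q (s + t) = q s * q t) := by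
  refine ⟨dyadicPow a, fun k m _ => dyadicPow_natCast_div_two_pow ha k m, ?_⟩
  intro s t hs ht
  obtain ⟨k, l, n, rfl, rfl⟩ := hs.exists_common_two_pow_denom ht
  rw [← add_div, ← Nat.cast_add]
  simp only [dyadicPow_natCast_div_two_pow ha, pow_add]
end

section
/- Let X = lim← X_n be the inverse limit of compact subsets X_n ⊂ ℂ with connecting maps f_n(z) = z², where X_n = closure(exp(2^{-n}Z)) for a closed set Z ⊂ ℂ with sup_{z∈Z} Re z = ζ < ∞ and inf_{z∈Z} Re z = η > -∞. If ξ ∈ X satisfies lim_{n→∞} π_n(ξ) = 1, where π_n is the n-th coordinate projection, then there exists a constant C > 0 such that |1 - π_n(ξ)| ≤ C·2^{-n} for all n. -/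
open Complex Filter Asymptotics Topology

/-! Squaring doubles the principal logarithm on the right half-plane, which eventually contains
every `ξ n`; hence `log (ξ n)` is eventually `a / 2 ^ n`, and `‖1 - ξ n‖ = ‖1 - exp (log (ξ n))‖`
is at most `2 ‖log (ξ n)‖` once that logarithm is small. -/

theorem Complex.log_sq_of_re_pos {z : ℂ} (hz : 0 < z.re) : log (z ^ 2) = 2 * log z := by
  have hz₀ : z ≠ 0 := by rintro rfl; simp at hz
  have harg : |arg z| < Real.pi / 2 := abs_arg_lt_pi_div_two_iff.mpr (.inl hz)
  rw [abs_lt] at harg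
  conv_lhs => rw [← exp_log hz₀, ← exp_nat_mul]
  push_cast
  refine log_exp ?_ ?_ <;> simp only [mul_im, re_ofNat, im_ofNat, log_im] <;> linarith

theorem isBigO_pow_of_eventually_succ_eq_mul {𝕜 : Type*} [NormedField 𝕜] {u : ℕ → 𝕜} {c : 𝕜}
    (hc : c ≠ 0) (hu : ∀ᶠ n in atTop, u (n + 1) = c * u n) : u =O[atTop] (c ^ ·) := by
  obtain ⟨N, hN⟩ := eventually_atTop.mp hu
  have hgeom : ∀ n ≥ N, u n = u N / c ^ N * c ^ n := by
    refine Nat.le_induction (by field_simp) fun n hn ih => ?_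
    rw [hN n hn, ih, pow_succ]
    ring
  exact (isBigO_const_mul_self _ _ _).congr'
    (eventually_atTop.mpr ⟨N, fun n hn => (hgeom n hn).symm⟩) EventuallyEq.rfl

theorem log_isBigO_inv_two_pow_of_sq_eq {x : ℕ → ℂ} (hsq : ∀ n, x (n + 1) ^ 2 = x n)
    (hlim : Tendsto x atTop (𝓝 1)) : (fun n => log (x n)) =O[atTop] ((2⁻¹ : ℂ) ^ ·) := by
  have hre : ∀ᶠ n in atTop, 0 < (x n).re :=
    ((continuous_re.tendsto 1).comp hlim).eventually (lt_mem_nhds (by simp))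
  refine isBigO_pow_of_eventually_succ_eq_mul (by norm_num) ?_
  filter_upwards [(tendsto_add_atTop_nat 1).eventually hre] with n hn
  rw [← hsq n, log_sq_of_re_pos hn]
  ring

theorem one_sub_isBigO_two_zpow_neg_of_sq_eq {x : ℕ → ℂ} (hsq : ∀ n, x (n + 1) ^ 2 = x n)
    (hlim : Tendsto x atTop (𝓝 1)) :
    (fun n => 1 - x n) =O[atTop] (fun n : ℕ => (2 : ℝ) ^ (-(n : ℤ))) := by
  have hlog := log_isBigO_inv_two_pow_of_sq_eq hsq hlim
  have hlog₀ : Tendsto (fun n => log (x n)) atTop (𝓝 0) :=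
    hlog.trans_tendsto (tendsto_pow_atTop_nhds_zero_of_norm_lt_one (by norm_num))
  have hexp : (fun n => 1 - x n) =O[atTop] (fun n => log (x n)) := by
    refine IsBigO.of_bound 2 ?_
    filter_upwards [hlim.eventually_ne one_ne_zero,
      hlog₀.eventually (Metric.closedBall_mem_nhds 0 one_pos)] with n hx₀ hsmall
    calc ‖1 - x n‖ = ‖exp (log (x n)) - 1‖ := by rw [exp_log hx₀, norm_sub_rev]
      _ ≤ 2 * ‖log (x n)‖ := norm_exp_sub_one_le (by simpa using hsmall)
  refine hexp.trans (hlog.trans (IsBigO.of_bound 1 (.of_forall fun n => ?_)))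
  simp

theorem stmt3_general (Z : Set ℂ)
    (X : Set (ℕ → ℂ))
    (hX : X = {x : ℕ → ℂ |
      (∀ n : ℕ, x n ∈ closure ((fun w : ℂ => Complex.exp ((2 : ℂ) ^ (-(n : ℤ)) * w)) '' Z)) ∧
      (∀ n : ℕ, (x (n + 1)) ^ 2 = x n)})
    (ξ : ℕ → ℂ) (hξ : ξ ∈ X)
    (hlim : Tendsto (fun n => ξ n) atTop (nhds 1)) :
    ∃ C > 0, ∀ n : ℕ, ‖1 - ξ n‖ ≤ C * (2 : ℝ) ^ (-(n : ℤ)) := by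
  rw [hX] at hξ
  have hbigO := one_sub_isBigO_two_zpow_neg_of_sq_eq hξ.2 hlim
  rw [← Nat.cofinite_eq_atTop, isBigO_cofinite_iff (by simp)] at hbigO
  obtain ⟨C, hC⟩ := hbigO
  refine ⟨max C 1, by positivity, fun n => (hC n).trans ?_⟩
  rw [Real.norm_of_nonneg (by positivity)]
  gcongr
  exact le_max_left C 1

/-- If `ξ` belongs to the inverse limit of `X_n = closure (exp (2^{-n} Z))` under squaring
maps, where `Z` is closed with real parts bounded between `η > -∞` and `ζ < ∞`, and the
coordinates `π_n ξ` tend to `1`, then `|1 - π_n ξ| = O(2^{-n})`. -/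
theorem stmt3 (Z : Set ℂ) (hZcl : IsClosed Z) (η ζ : ℝ)
    (hη : ∀ z ∈ Z, η ≤ z.re) (hζ : ∀ z ∈ Z, z.re ≤ ζ)
    (X : Set (ℕ → ℂ))
    (hX : X = {x : ℕ → ℂ |
      (∀ n : ℕ, x n ∈ closure ((fun w : ℂ => Complex.exp ((2 : ℂ) ^ (-(n : ℤ)) * w)) '' Z)) ∧
      (∀ n : ℕ, (x (n + 1)) ^ 2 = x n)})
    (ξ : ℕ → ℂ) (hξ : ξ ∈ X)
    (hlim : Tendsto (fun n => ξ n) atTop (nhds 1)) :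
    ∃ C > 0, ∀ n : ℕ, ‖1 - ξ n‖ ≤ C * (2 : ℝ) ^ (-(n : ℤ)) :=
  stmt3_general Z X hX ξ hξ hlim
end

section
/- Let ℍ be a Hilbert space and (q(t))_{t∈𝔻} a dyadic operator semigroup on ℍ (q(s+t)=q(s)q(t) for positive dyadic rationals s,t) such that ‖q(t)‖ ≤ e^{tζ} for some ζ ∈ ℝ and all t ∈ 𝔻, and such that q(t)x → x as t → 0 through 𝔻 for every x ∈ ℍ. Then there exists a strongly continuous semigroup (T(t))_{t≥0} of bounded operators on ℍ with T(t) = q(t) for all t ∈ 𝔻. -/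
open Filter

namespace Stmt10Aux

lemma dyadic_pos {t : ℚ} (h : IsPosDyadic t) : 0 < t := by
  obtain ⟨k, m, hk, rfl⟩ := h
  exact div_pos (by exact_mod_cast hk) (by positivity)

lemma dyadic_iff {t : ℚ} : IsPosDyadic t ↔ 0 < t ∧ ∃ z : ℤ, ∃ m : ℕ, t = (z : ℚ) / 2 ^ m := by
  constructor
  · rintro h
    refine ⟨dyadic_pos h, ?_⟩
    obtain ⟨k, m, hk, rfl⟩ := h
    exact ⟨k, m, by push_cast; ring⟩
  · rintro ⟨ht, z, m, rfl⟩
    have h2 : (0:ℚ) < 2 ^ m := by positivity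
    have hz : 0 < z := by
      have he : (z:ℚ) = ((z:ℚ) / 2 ^ m) * 2 ^ m := by field_simp
      have : (0:ℚ) < z := by rw [he]; exact mul_pos ht h2
      exact_mod_cast this
    refine ⟨z.toNat, m, by omega, ?_⟩
    rw [show ((z.toNat : ℕ) : ℚ) = (z : ℚ) by exact_mod_cast congrArg Int.cast (Int.toNat_of_nonneg hz.le)]

lemma dyadic_add {u v : ℚ} (hu : IsPosDyadic u) (hv : IsPosDyadic v) : IsPosDyadic (u + v) := by
  rw [dyadic_iff] at *
  obtain ⟨hu0, a, m, rfl⟩ := hu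
  obtain ⟨hv0, b, n, rfl⟩ := hv
  refine ⟨by linarith, a * 2 ^ n + b * 2 ^ m, m + n, ?_⟩
  have hm : ((2:ℚ)) ^ m ≠ 0 := by positivity
  have hn : ((2:ℚ)) ^ n ≠ 0 := by positivity
  push_cast
  rw [div_add_div _ _ hm hn, pow_add]
  ring_nf

lemma dyadic_sub {u v : ℚ} (hu : IsPosDyadic u) (hv : IsPosDyadic v) (h : u < v) :
    IsPosDyadic (v - u) := by
  rw [dyadic_iff] at *
  obtain ⟨hu0, a, m, rfl⟩ := hu
  obtain ⟨hv0, b, n, rfl⟩ := hv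
  refine ⟨by linarith, b * 2 ^ m - a * 2 ^ n, m + n, ?_⟩
  have hm : ((2:ℚ)) ^ m ≠ 0 := by positivity
  have hn : ((2:ℚ)) ^ n ≠ 0 := by positivity
  push_cast
  rw [div_sub_div _ _ hn hm, pow_add]
  ring_nf

lemma exists_dyadic_near (t : ℝ) (ht : 0 ≤ t) {δ : ℝ} (hδ : 0 < δ) :
    ∃ w : ℚ, IsPosDyadic w ∧ |(w : ℝ) - t| < δ := by
  obtain ⟨m, hm⟩ := exists_pow_lt_of_lt_one hδ (by norm_num : (1:ℝ)/2 < 1)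
  have h2m : (0:ℝ) < 2 ^ m := by positivity
  set k : ℕ := (⌊t * 2 ^ m⌋).toNat + 1 with hk
  refine ⟨(k : ℚ) / 2 ^ m, ⟨k, m, Nat.succ_pos _, rfl⟩, ?_⟩
  have hfl : (0:ℤ) ≤ ⌊t * 2 ^ m⌋ := Int.floor_nonneg.2 (by positivity)
  have hkr : (k : ℝ) = (⌊t * 2 ^ m⌋ : ℝ) + 1 := by
    rw [hk]
    push_cast
    have h9 : ((⌊t * 2 ^ m⌋.toNat : ℕ) : ℝ) = ((⌊t * 2 ^ m⌋ : ℤ) : ℝ) := by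
      exact_mod_cast congrArg (fun z : ℤ => (z : ℝ)) (Int.toNat_of_nonneg hfl)
    rw [h9]
  have h1 : t * 2 ^ m < (k : ℝ) := by rw [hkr]; exact Int.lt_floor_add_one _
  have h2 : (k : ℝ) ≤ t * 2 ^ m + 1 := by
    rw [hkr]
    have := Int.floor_le (t * 2 ^ m)
    linarith
  have hdm : (1:ℝ) < δ * 2 ^ m := by
    have : (1:ℝ)/2^m < δ := by
      rw [div_pow] at hm
      simpa using hm
    calc (1:ℝ) = 1/2^m * 2^m := by field_simp
    _ < δ * 2 ^ m := by exact mul_lt_mul_of_pos_right this h2m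
  have hcast : (((k : ℚ) / 2 ^ m : ℚ) : ℝ) = (k : ℝ) / 2 ^ m := by push_cast; ring
  rw [hcast, abs_lt]
  constructor
  · rw [lt_sub_iff_add_lt, lt_div_iff₀ h2m]
    nlinarith
  · rw [sub_lt_iff_lt_add, div_lt_iff₀ h2m]
    nlinarith

def D : Set ℚ := {t | IsPosDyadic t}

def F (t : ℝ) : Filter ℚ := comap (fun s : ℚ => (s : ℝ)) (nhds t) ⊓ 𝓟 D

lemma F_basis (t : ℝ) : (F t).HasBasis (fun ε : ℝ => 0 < ε)
    (fun ε => ((fun s : ℚ => (s : ℝ)) ⁻¹' Metric.ball t ε) ∩ D) :=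
  ((Metric.nhds_basis_ball).comap _).inf_principal D

lemma mem_F_set {t ε : ℝ} {s : ℚ} :
    s ∈ ((fun s : ℚ => (s : ℝ)) ⁻¹' Metric.ball t ε) ∩ D ↔ |(s : ℝ) - t| < ε ∧ IsPosDyadic s := by
  simp [Metric.mem_ball, Real.dist_eq, D, Set.mem_setOf_eq]

lemma F_neBot (t : ℝ) (ht : 0 ≤ t) : (F t).NeBot := by
  rw [(F_basis t).neBot_iff]
  intro ε hε
  obtain ⟨w, hw, hwd⟩ := exists_dyadic_near t ht hε
  exact ⟨w, mem_F_set.2 ⟨hwd, hw⟩⟩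

lemma tendsto_coe (t : ℝ) : Tendsto (fun s : ℚ => (s : ℝ)) (F t) (nhds t) :=
  tendsto_comap.mono_left inf_le_left

lemma D_mem (t : ℝ) : D ∈ F t := mem_inf_of_right (mem_principal_self D)

end Stmt10Aux

section Op

open Filter Stmt10Aux

variable {H : Type*} [NormedAddCommGroup H] [InnerProductSpace ℂ H] [CompleteSpace H]

namespace Stmt10Aux

lemma est (q : ℚ → H →L[ℂ] H) (ζ : ℝ)
    (hsg : ∀ s t : ℚ, IsPosDyadic s → IsPosDyadic t → q (s + t) = q s * q t)
    (hnorm : ∀ t : ℚ, IsPosDyadic t → ‖q t‖ ≤ Real.exp ((t : ℝ) * ζ))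
    {u v : ℚ} (hu : IsPosDyadic u) (hv : IsPosDyadic v) (huv : u < v) (x : H) :
    ‖q v x - q u x‖ ≤ Real.exp ((u : ℝ) * ζ) * ‖q (v - u) x - x‖ := by
  have hd := dyadic_sub hu hv huv
  have hqv : q v = q u * q (v - u) := by
    rw [← hsg u (v - u) hu hd]
    congr 1
    ring
  have heq : q v x - q u x = q u (q (v - u) x - x) := by
    rw [hqv]; simp [ContinuousLinearMap.mul_apply, map_sub]
  rw [heq]
  calc ‖q u (q (v - u) x - x)‖ ≤ ‖q u‖ * ‖q (v - u) x - x‖ := (q u).le_opNorm _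
  _ ≤ Real.exp ((u : ℝ) * ζ) * ‖q (v - u) x - x‖ :=
      mul_le_mul_of_nonneg_right (hnorm u hu) (norm_nonneg _)

lemma key (q : ℚ → H →L[ℂ] H) (ζ : ℝ)
    (hsg : ∀ s t : ℚ, IsPosDyadic s → IsPosDyadic t → q (s + t) = q s * q t)
    (hnorm : ∀ t : ℚ, IsPosDyadic t → ‖q t‖ ≤ Real.exp ((t : ℝ) * ζ))
    (hq : ∀ x : H, ∀ ε > (0:ℝ), ∃ δ > (0:ℝ), ∀ s : ℚ, IsPosDyadic s → |(s:ℝ)| < δ → ‖q s x - x‖ < ε)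
    (x : H) (B : ℝ) {ε : ℝ} (hε : 0 < ε) :
    ∃ δ > (0:ℝ), ∀ u v : ℚ, IsPosDyadic u → IsPosDyadic v → (u : ℝ) ≤ B → (v : ℝ) ≤ B →
      |(u : ℝ) - (v : ℝ)| < δ → ‖q u x - q v x‖ < ε := by
  set C := Real.exp (|B| * |ζ|) with hC
  have hC0 : 0 < C := Real.exp_pos _
  obtain ⟨δ, hδ0, h⟩ := hq x (ε / C) (by positivity)
  have exple : ∀ u : ℚ, IsPosDyadic u → (u : ℝ) ≤ B → Real.exp ((u : ℝ) * ζ) ≤ C := by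
    intro u hu hB
    apply Real.exp_le_exp.2
    have h0 : (0:ℝ) < (u : ℝ) := by exact_mod_cast dyadic_pos hu
    calc (u : ℝ) * ζ ≤ |(u : ℝ) * ζ| := le_abs_self _
    _ = |(u : ℝ)| * |ζ| := abs_mul _ _
    _ ≤ |B| * |ζ| := by
        apply mul_le_mul_of_nonneg_right _ (abs_nonneg _)
        rw [abs_of_pos h0]
        exact le_trans hB (le_abs_self _)
  have main : ∀ u v : ℚ, IsPosDyadic u → IsPosDyadic v → (u : ℝ) ≤ B → u < v →
      |(u : ℝ) - (v : ℝ)| < δ → ‖q v x - q u x‖ < ε := by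
    intro u v hu hv hBu hlt hd
    have hsub := dyadic_sub hu hv hlt
    have habs : |((v - u : ℚ) : ℝ)| < δ := by
      push_cast
      rw [abs_sub_comm] at hd
      simpa using hd
    have h2 := h (v - u) hsub habs
    calc ‖q v x - q u x‖ ≤ Real.exp ((u : ℝ) * ζ) * ‖q (v - u) x - x‖ :=
        est q ζ hsg hnorm hu hv hlt x
    _ < Real.exp ((u : ℝ) * ζ) * (ε / C) :=
        mul_lt_mul_of_pos_left h2 (Real.exp_pos _)
    _ ≤ C * (ε / C) :=
        mul_le_mul_of_nonneg_right (exple u hu hBu) (by positivity)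
    _ = ε := by field_simp
  refine ⟨δ, hδ0, fun u v hu hv hBu hBv hd => ?_⟩
  rcases lt_trichotomy u v with h' | h' | h'
  · rw [norm_sub_rev]; exact main u v hu hv hBu h' hd
  · rw [h']; simpa using hε
  · exact main v u hv hu hBv h' (by rw [abs_sub_comm] at hd; exact hd)

lemma cauchyF (q : ℚ → H →L[ℂ] H) (ζ : ℝ)
    (hsg : ∀ s t : ℚ, IsPosDyadic s → IsPosDyadic t → q (s + t) = q s * q t)
    (hnorm : ∀ t : ℚ, IsPosDyadic t → ‖q t‖ ≤ Real.exp ((t : ℝ) * ζ))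
    (hq : ∀ x : H, ∀ ε > (0:ℝ), ∃ δ > (0:ℝ), ∀ s : ℚ, IsPosDyadic s → |(s:ℝ)| < δ → ‖q s x - x‖ < ε)
    (x : H) (t : ℝ) (ht : 0 ≤ t) :
    Cauchy (map (fun s : ℚ => q s x) (F t)) := by
  haveI := F_neBot t ht
  rw [Metric.cauchy_iff]
  refine ⟨map_neBot, fun ε hε => ?_⟩
  obtain ⟨δ, hδ0, hk⟩ := key q ζ hsg hnorm hq x (t + 1) hε
  have hr0 : (0:ℝ) < min δ 1 / 2 := by positivity
  refine ⟨(fun s : ℚ => q s x) '' (((fun s : ℚ => (s : ℝ)) ⁻¹' Metric.ball t (min δ 1 / 2)) ∩ D),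
    image_mem_map ((F_basis t).mem_of_mem hr0), ?_⟩
  rintro _ ⟨u, hu, rfl⟩ _ ⟨v, hv, rfl⟩
  rw [mem_F_set] at hu hv
  rw [dist_eq_norm]
  obtain ⟨hu1, hu2⟩ := hu
  obtain ⟨hv1, hv2⟩ := hv
  rw [abs_lt] at hu1 hv1
  apply hk u v hu2 hv2
  · have : min δ 1 ≤ 1 := min_le_right _ _
    linarith [hu1.2]
  · have : min δ 1 ≤ 1 := min_le_right _ _
    linarith [hv1.2]
  · have : min δ 1 ≤ δ := min_le_left _ _
    rw [abs_lt]
    constructor <;> [linarith [hu1.1, hv1.2]; linarith [hu1.2, hv1.1]]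

noncomputable def Tfun (q : ℚ → H →L[ℂ] H) (t : ℝ) (x : H) : H :=
  letI : Nonempty H := ⟨0⟩
  limUnder (F t) (fun s : ℚ => q s x)

lemma tendsto_Tfun (q : ℚ → H →L[ℂ] H) (ζ : ℝ)
    (hsg : ∀ s t : ℚ, IsPosDyadic s → IsPosDyadic t → q (s + t) = q s * q t)
    (hnorm : ∀ t : ℚ, IsPosDyadic t → ‖q t‖ ≤ Real.exp ((t : ℝ) * ζ))
    (hq : ∀ x : H, ∀ ε > (0:ℝ), ∃ δ > (0:ℝ), ∀ s : ℚ, IsPosDyadic s → |(s:ℝ)| < δ → ‖q s x - x‖ < ε)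
    (x : H) (t : ℝ) (ht : 0 ≤ t) :
    Tendsto (fun s : ℚ => q s x) (F t) (nhds (Tfun q t x)) := by
  letI : Nonempty H := ⟨0⟩
  haveI := F_neBot t ht
  exact (cauchyF q ζ hsg hnorm hq x t ht).le_nhds_lim

lemma approx (q : ℚ → H →L[ℂ] H) (ζ : ℝ)
    (hsg : ∀ s t : ℚ, IsPosDyadic s → IsPosDyadic t → q (s + t) = q s * q t)
    (hnorm : ∀ t : ℚ, IsPosDyadic t → ‖q t‖ ≤ Real.exp ((t : ℝ) * ζ))
    (hq : ∀ x : H, ∀ ε > (0:ℝ), ∃ δ > (0:ℝ), ∀ s : ℚ, IsPosDyadic s → |(s:ℝ)| < δ → ‖q s x - x‖ < ε)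
    (x : H) (t : ℝ) (ht : 0 ≤ t) {ε : ℝ} (hε : 0 < ε) :
    ∃ δ > (0:ℝ), ∀ w : ℚ, IsPosDyadic w → |(w : ℝ) - t| < δ → ‖q w x - Tfun q t x‖ < ε := by
  haveI := F_neBot t ht
  obtain ⟨δ₀, hδ₀, hk⟩ := key q ζ hsg hnorm hq x (t + 1) (half_pos hε)
  have hr0 : (0:ℝ) < min δ₀ 1 / 2 := by positivity
  have hmem1 : {s : ℚ | ‖q s x - Tfun q t x‖ < ε / 2} ∈ F t := by
    have h0 := tendsto_Tfun q ζ hsg hnorm hq x t ht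
      (Metric.ball_mem_nhds (Tfun q t x) (half_pos hε))
    exact Filter.mem_of_superset h0 fun s hs => by
      simpa [Metric.mem_ball, dist_eq_norm] using hs
  have hmem2 := (F_basis t).mem_of_mem (i := min δ₀ 1 / 2) hr0
  obtain ⟨w₀, hw₀1, hw₀2⟩ := Filter.nonempty_of_mem (inter_mem hmem1 hmem2)
  rw [mem_F_set] at hw₀2
  obtain ⟨hw₀d, hw₀dy⟩ := hw₀2
  refine ⟨min δ₀ 1 / 2, hr0, fun w hw hwd => ?_⟩
  have tri : ‖q w x - Tfun q t x‖ ≤ ‖q w x - q w₀ x‖ + ‖q w₀ x - Tfun q t x‖ := by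
    have e : q w x - Tfun q t x = (q w x - q w₀ x) - (Tfun q t x - q w₀ x) := by abel
    calc ‖q w x - Tfun q t x‖ = ‖(q w x - q w₀ x) - (Tfun q t x - q w₀ x)‖ := by rw [e]
    _ ≤ ‖q w x - q w₀ x‖ + ‖Tfun q t x - q w₀ x‖ := norm_sub_le _ _
    _ = ‖q w x - q w₀ x‖ + ‖q w₀ x - Tfun q t x‖ := by rw [norm_sub_rev (Tfun q t x)]
  have h1 : ‖q w x - q w₀ x‖ < ε / 2 := by
    rw [abs_lt] at hwd hw₀d
    apply hk w w₀ hw hw₀dy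
    · have : min δ₀ 1 ≤ 1 := min_le_right _ _
      linarith [hwd.2]
    · have : min δ₀ 1 ≤ 1 := min_le_right _ _
      linarith [hw₀d.2]
    · have : min δ₀ 1 ≤ δ₀ := min_le_left _ _
      rw [abs_lt]
      constructor <;> [linarith [hwd.1, hw₀d.2]; linarith [hwd.2, hw₀d.1]]
  have h2 : ‖q w₀ x - Tfun q t x‖ < ε / 2 := hw₀1
  linarith

end Stmt10Aux
end Op

section Main

open Filter Stmt10Aux

variable {H : Type*} [NormedAddCommGroup H] [InnerProductSpace ℂ H] [CompleteSpace H]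

namespace Stmt10Aux

lemma Tfun_add (q : ℚ → H →L[ℂ] H) (ζ : ℝ)
    (hsg : ∀ s t : ℚ, IsPosDyadic s → IsPosDyadic t → q (s + t) = q s * q t)
    (hnorm : ∀ t : ℚ, IsPosDyadic t → ‖q t‖ ≤ Real.exp ((t : ℝ) * ζ))
    (hq : ∀ x : H, ∀ ε > (0:ℝ), ∃ δ > (0:ℝ), ∀ s : ℚ, IsPosDyadic s → |(s:ℝ)| < δ → ‖q s x - x‖ < ε)
    (x y : H) (t : ℝ) (ht : 0 ≤ t) :
    Tfun q t (x + y) = Tfun q t x + Tfun q t y := by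
  haveI := F_neBot t ht
  have h1 := tendsto_Tfun q ζ hsg hnorm hq (x + y) t ht
  have h2 := (tendsto_Tfun q ζ hsg hnorm hq x t ht).add (tendsto_Tfun q ζ hsg hnorm hq y t ht)
  have he : (fun s : ℚ => q s (x + y)) = fun s : ℚ => q s x + q s y := by
    funext s; simp [map_add]
  rw [he] at h1
  exact tendsto_nhds_unique h1 h2

lemma Tfun_smul (q : ℚ → H →L[ℂ] H) (ζ : ℝ)
    (hsg : ∀ s t : ℚ, IsPosDyadic s → IsPosDyadic t → q (s + t) = q s * q t)
    (hnorm : ∀ t : ℚ, IsPosDyadic t → ‖q t‖ ≤ Real.exp ((t : ℝ) * ζ))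
    (hq : ∀ x : H, ∀ ε > (0:ℝ), ∃ δ > (0:ℝ), ∀ s : ℚ, IsPosDyadic s → |(s:ℝ)| < δ → ‖q s x - x‖ < ε)
    (c : ℂ) (x : H) (t : ℝ) (ht : 0 ≤ t) :
    Tfun q t (c • x) = c • Tfun q t x := by
  haveI := F_neBot t ht
  have h1 := tendsto_Tfun q ζ hsg hnorm hq (c • x) t ht
  have h2 := (tendsto_Tfun q ζ hsg hnorm hq x t ht).const_smul c
  have he : (fun s : ℚ => q s (c • x)) = fun s : ℚ => c • q s x := by
    funext s; simp [map_smul]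
  rw [he] at h1
  exact tendsto_nhds_unique h1 h2

lemma Tfun_norm (q : ℚ → H →L[ℂ] H) (ζ : ℝ)
    (hsg : ∀ s t : ℚ, IsPosDyadic s → IsPosDyadic t → q (s + t) = q s * q t)
    (hnorm : ∀ t : ℚ, IsPosDyadic t → ‖q t‖ ≤ Real.exp ((t : ℝ) * ζ))
    (hq : ∀ x : H, ∀ ε > (0:ℝ), ∃ δ > (0:ℝ), ∀ s : ℚ, IsPosDyadic s → |(s:ℝ)| < δ → ‖q s x - x‖ < ε)
    (x : H) (t : ℝ) (ht : 0 ≤ t) :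
    ‖Tfun q t x‖ ≤ Real.exp (t * ζ) * ‖x‖ := by
  haveI := F_neBot t ht
  have h1 : Tendsto (fun s : ℚ => ‖q s x‖) (F t) (nhds ‖Tfun q t x‖) :=
    (tendsto_Tfun q ζ hsg hnorm hq x t ht).norm
  have h2 : Tendsto (fun s : ℚ => Real.exp ((s : ℝ) * ζ) * ‖x‖) (F t)
      (nhds (Real.exp (t * ζ) * ‖x‖)) := by
    have hc : Continuous fun r : ℝ => Real.exp (r * ζ) * ‖x‖ := by continuity
    exact (hc.tendsto t).comp (tendsto_coe t)
  apply le_of_tendsto_of_tendsto h1 h2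
  filter_upwards [D_mem t] with s hs
  calc ‖q s x‖ ≤ ‖q s‖ * ‖x‖ := (q s).le_opNorm x
  _ ≤ Real.exp ((s : ℝ) * ζ) * ‖x‖ := mul_le_mul_of_nonneg_right (hnorm s hs) (norm_nonneg x)

end Stmt10Aux
end Main

open Filter

/-- A dyadic operator semigroup `(q t)` on a Hilbert space with `‖q t‖ ≤ exp (t ζ)` that is
strongly continuous at `0` extends to a strongly continuous semigroup `(T t)_{t ≥ 0}`. -/
theorem stmt10 {H : Type*} [NormedAddCommGroup H] [InnerProductSpace ℂ H] [CompleteSpace H]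
    (q : ℚ → H →L[ℂ] H) (ζ : ℝ)
    (hsg : ∀ s t : ℚ, IsPosDyadic s → IsPosDyadic t → q (s + t) = q s * q t)
    (hnorm : ∀ t : ℚ, IsPosDyadic t → ‖q t‖ ≤ Real.exp ((t : ℝ) * ζ))
    (hlim : ∀ x : H,
      Tendsto (fun t : ℚ => q t x) (nhdsWithin 0 {t : ℚ | IsPosDyadic t}) (nhds x)) :
    ∃ T : ℝ → H →L[ℂ] H,
      T 0 = 1 ∧
      (∀ s t : ℝ, 0 ≤ s → 0 ≤ t → T (s + t) = T s * T t) ∧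
      (∀ x : H, ContinuousOn (fun t : ℝ => T t x) (Set.Ici 0)) ∧
      (∀ t : ℚ, IsPosDyadic t → T (t : ℝ) = q t) := by
  classical
  open Stmt10Aux in
  have hq : ∀ x : H, ∀ ε > (0:ℝ), ∃ δ > (0:ℝ), ∀ s : ℚ, IsPosDyadic s → |(s:ℝ)| < δ →
      ‖q s x - x‖ < ε := by
    intro x ε hε
    obtain ⟨δ, hδ, h⟩ := Metric.tendsto_nhdsWithin_nhds.1 (hlim x) ε hε
    refine ⟨δ, hδ, fun s hs hsd => ?_⟩
    have hd : dist s 0 < δ := by rw [Rat.dist_eq]; simpa using hsd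
    have := h hs hd
    rwa [dist_eq_norm] at this
  refine ⟨fun t => LinearMap.mkContinuous
    { toFun := fun x => Stmt10Aux.Tfun q (max t 0) x
      map_add' := fun x y => Stmt10Aux.Tfun_add q ζ hsg hnorm hq x y (max t 0) (le_max_right _ _)
      map_smul' := fun c x =>
        Stmt10Aux.Tfun_smul q ζ hsg hnorm hq c x (max t 0) (le_max_right _ _) }
    (Real.exp (max t 0 * ζ))
    (fun x => Stmt10Aux.Tfun_norm q ζ hsg hnorm hq x (max t 0) (le_max_right _ _)), ?_, ?_, ?_, ?_⟩
  · -- T 0 = 1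
    ext x
    simp only [LinearMap.mkContinuous_apply, LinearMap.coe_mk, AddHom.coe_mk,
      ContinuousLinearMap.one_apply, max_self]
    apply eq_of_forall_dist_le
    intro ε hε
    obtain ⟨δ₁, hδ₁, ha⟩ := Stmt10Aux.approx q ζ hsg hnorm hq x 0 le_rfl (half_pos hε)
    obtain ⟨δ₂, hδ₂, hb⟩ := hq x (ε / 2) (half_pos hε)
    obtain ⟨w, hw, hwd⟩ := Stmt10Aux.exists_dyadic_near 0 le_rfl (lt_min hδ₁ hδ₂)
    have h1 : ‖q w x - Stmt10Aux.Tfun q 0 x‖ < ε / 2 :=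
      ha w hw (lt_of_lt_of_le hwd (min_le_left _ _))
    have h2 : ‖q w x - x‖ < ε / 2 := by
      refine hb w hw ?_
      have := lt_of_lt_of_le hwd (min_le_right _ _)
      simpa using this
    have := dist_triangle (Stmt10Aux.Tfun q 0 x) (q w x) x
    rw [dist_eq_norm, dist_eq_norm, dist_eq_norm] at *
    rw [norm_sub_rev] at h1
    linarith
  · -- semigroup
    intro s t hs ht
    ext x
    simp only [LinearMap.mkContinuous_apply, LinearMap.coe_mk, AddHom.coe_mk,
      ContinuousLinearMap.mul_apply]
    rw [max_eq_left (by linarith : (0:ℝ) ≤ s + t), max_eq_left ht, max_eq_left hs]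
    apply eq_of_forall_dist_le
    intro ε hε
    set y := Stmt10Aux.Tfun q t x with hy
    set C := Real.exp ((s + 1) * |ζ|) with hCdef
    have hC0 : (0:ℝ) < C := Real.exp_pos _
    have hε₁ : (0:ℝ) < ε / (C + 2) := by positivity
    obtain ⟨δ₁, hδ₁, h₁⟩ := Stmt10Aux.approx q ζ hsg hnorm hq x (s + t) (by linarith) hε₁
    obtain ⟨δ₂, hδ₂, h₂⟩ := Stmt10Aux.approx q ζ hsg hnorm hq x t ht hε₁
    obtain ⟨δ₃, hδ₃, h₃⟩ := Stmt10Aux.approx q ζ hsg hnorm hq y s hs hε₁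
    have hρ2 : (0:ℝ) < min δ₂ (min (δ₁ / 2) 1) := by positivity
    have hρ3 : (0:ℝ) < min δ₃ (min (δ₁ / 2) 1) := by positivity
    obtain ⟨v, hv, hvd⟩ := Stmt10Aux.exists_dyadic_near t ht hρ2
    obtain ⟨u, hu, hud⟩ := Stmt10Aux.exists_dyadic_near s hs hρ3
    have huv : IsPosDyadic (u + v) := Stmt10Aux.dyadic_add hu hv
    have hud1 : |(u:ℝ) - s| < δ₁ / 2 :=
      lt_of_lt_of_le hud (le_trans (min_le_right _ _) (min_le_left _ _))
    have hvd1 : |(v:ℝ) - t| < δ₁ / 2 :=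
      lt_of_lt_of_le hvd (le_trans (min_le_right _ _) (min_le_left _ _))
    have hsum : |((u + v : ℚ) : ℝ) - (s + t)| < δ₁ := by
      push_cast
      calc |(u:ℝ) + v - (s + t)| = |((u:ℝ) - s) + ((v:ℝ) - t)| := by ring_nf
      _ ≤ |(u:ℝ) - s| + |(v:ℝ) - t| := abs_add_le _ _
      _ < δ₁ / 2 + δ₁ / 2 := add_lt_add hud1 hvd1
      _ = δ₁ := by ring
    have ha : ‖q (u + v) x - Stmt10Aux.Tfun q (s + t) x‖ < ε / (C + 2) := h₁ (u + v) huv hsum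
    have hb : ‖q u (q v x) - q u y‖ ≤ C * (ε / (C + 2)) := by
      have hqv : ‖q v x - y‖ ≤ ε / (C + 2) :=
        le_of_lt (h₂ v hv (lt_of_lt_of_le hvd (min_le_left _ _)))
      have hexp : ‖q u‖ ≤ C := by
        refine le_trans (hnorm u hu) (Real.exp_le_exp.2 ?_)
        have hu0 : (0:ℝ) < (u:ℝ) := by exact_mod_cast Stmt10Aux.dyadic_pos hu
        have hub : (u:ℝ) ≤ s + 1 := by
          have := lt_of_lt_of_le hud (le_trans (min_le_right _ _) (min_le_right _ _))
          rw [abs_lt] at this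
          linarith [this.2]
        calc (u:ℝ) * ζ ≤ |(u:ℝ) * ζ| := le_abs_self _
        _ = |(u:ℝ)| * |ζ| := abs_mul _ _
        _ ≤ (s + 1) * |ζ| := by
            apply mul_le_mul_of_nonneg_right _ (abs_nonneg _)
            rw [abs_of_pos hu0]
            exact hub
      calc ‖q u (q v x) - q u y‖ = ‖q u (q v x - y)‖ := by rw [map_sub]
      _ ≤ ‖q u‖ * ‖q v x - y‖ := (q u).le_opNorm _
      _ ≤ C * (ε / (C + 2)) := by
          apply mul_le_mul hexp hqv (norm_nonneg _) (le_of_lt hC0)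
    have hc : ‖q u y - Stmt10Aux.Tfun q s y‖ < ε / (C + 2) :=
      h₃ u hu (lt_of_lt_of_le hud (min_le_left _ _))
    have hcomp : q (u + v) x = q u (q v x) := by
      rw [hsg u v hu hv]; rfl
    have htri := dist_triangle4 (Stmt10Aux.Tfun q (s + t) x) (q (u + v) x) (q u y)
      (Stmt10Aux.Tfun q s y)
    rw [dist_eq_norm, dist_eq_norm, dist_eq_norm, dist_eq_norm] at htri
    rw [norm_sub_rev] at ha
    rw [hcomp] at htri ha
    have : dist (Stmt10Aux.Tfun q (s + t) x) (Stmt10Aux.Tfun q s y) ≤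
        ε / (C + 2) + C * (ε / (C + 2)) + ε / (C + 2) := by
      rw [dist_eq_norm]
      linarith
    calc dist (Stmt10Aux.Tfun q (s + t) x) (Stmt10Aux.Tfun q s y) ≤
        ε / (C + 2) + C * (ε / (C + 2)) + ε / (C + 2) := this
    _ = ε := by field_simp; ring
  · -- strong continuity
    intro x
    rw [Metric.continuousOn_iff]
    intro t₀ ht₀ ε hε
    rw [Set.mem_Ici] at ht₀
    have hε3 : (0:ℝ) < ε / 3 := by positivity
    obtain ⟨δ₀, hδ₀, hk⟩ := Stmt10Aux.key q ζ hsg hnorm hq x (t₀ + 1) hε3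
    have hr0 : (0:ℝ) < min δ₀ 1 / 4 := by positivity
    refine ⟨min δ₀ 1 / 4, hr0, fun t htIci htd => ?_⟩
    rw [Set.mem_Ici] at htIci
    rw [Real.dist_eq] at htd
    obtain ⟨δa, hδa, ha⟩ := Stmt10Aux.approx q ζ hsg hnorm hq x t htIci hε3
    obtain ⟨δb, hδb, hb⟩ := Stmt10Aux.approx q ζ hsg hnorm hq x t₀ ht₀ hε3
    obtain ⟨u, hu, hud⟩ := Stmt10Aux.exists_dyadic_near t htIci
      (lt_min hδa hr0 : (0:ℝ) < min δa (min δ₀ 1 / 4))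
    obtain ⟨v, hv, hvd⟩ := Stmt10Aux.exists_dyadic_near t₀ ht₀
      (lt_min hδb hr0 : (0:ℝ) < min δb (min δ₀ 1 / 4))
    have h1 : ‖q u x - Stmt10Aux.Tfun q t x‖ < ε / 3 :=
      ha u hu (lt_of_lt_of_le hud (min_le_left _ _))
    have h3 : ‖q v x - Stmt10Aux.Tfun q t₀ x‖ < ε / 3 :=
      hb v hv (lt_of_lt_of_le hvd (min_le_left _ _))
    have hud' : |(u:ℝ) - t| < min δ₀ 1 / 4 := lt_of_lt_of_le hud (min_le_right _ _)
    have hvd' : |(v:ℝ) - t₀| < min δ₀ 1 / 4 := lt_of_lt_of_le hvd (min_le_right _ _)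
    have hm1 : min δ₀ 1 ≤ δ₀ := min_le_left _ _
    have hm2 : min δ₀ 1 ≤ 1 := min_le_right _ _
    rw [abs_lt] at hud' hvd' htd
    have h2 : ‖q u x - q v x‖ < ε / 3 := by
      apply hk u v hu hv
      · linarith [hud'.2, htd.2]
      · linarith [hvd'.2]
      · rw [abs_lt]
        constructor
        · linarith [hud'.1, htd.1, hvd'.2]
        · linarith [hud'.2, htd.2, hvd'.1]
    simp only [LinearMap.mkContinuous_apply, LinearMap.coe_mk, AddHom.coe_mk]
    rw [max_eq_left htIci, max_eq_left ht₀]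
    have htri := dist_triangle4 (Stmt10Aux.Tfun q t x) (q u x) (q v x) (Stmt10Aux.Tfun q t₀ x)
    rw [dist_eq_norm, dist_eq_norm, dist_eq_norm, dist_eq_norm] at htri
    rw [dist_eq_norm]
    rw [norm_sub_rev] at h1
    linarith
  · -- agreement with q on dyadics
    intro a ha
    ext x
    simp only [LinearMap.mkContinuous_apply, LinearMap.coe_mk, AddHom.coe_mk]
    have ha0 : (0:ℝ) ≤ (a:ℝ) := by
      have := Stmt10Aux.dyadic_pos ha
      exact_mod_cast this.le
    rw [max_eq_left ha0]
    apply eq_of_forall_dist_le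
    intro ε hε
    obtain ⟨δ, hδ, h⟩ := Stmt10Aux.approx q ζ hsg hnorm hq x (a:ℝ) ha0 hε
    have := h a ha (by simpa using hδ)
    rw [dist_eq_norm, norm_sub_rev]
    exact this.le
end

section
/- Let (n_j)_{j} be a strictly increasing sequence of natural numbers indexed by primes j ≥ 3, and set α_j = π/j + 2^{n_j+1}π, β_j = π/j + 3·2^{n_j}π. Then for primes j, k ≥ 3 and a natural number N, exp(2^{-N} α_j i) = -exp(2^{-N} β_k i) holds if and only if j = k and N = n_j. -/
open Real

lemma exp_eq_neg_exp_iff' (z w : ℂ) :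
    Complex.exp z = -Complex.exp w ↔
      ∃ m : ℤ, z = w + π * Complex.I + m * (2 * π * Complex.I) := by
  rw [show -Complex.exp w = Complex.exp (w + π * Complex.I) by
    rw [Complex.exp_add, Complex.exp_pi_mul_I]; ring]
  exact Complex.exp_eq_exp_iff_exists_int

/-- With `α_j = π/j + 2^(n_j + 1) π` and `β_j = π/j + 3·2^(n_j) π` for a strictly increasing
sequence `(n_j)`, and primes `j, k ≥ 3`, the equality
`exp(2^{-N} α_j i) = -exp(2^{-N} β_k i)` holds iff `j = k` and `N = n_j`. -/
theorem stmt16 (n : ℕ → ℕ) (hn : StrictMono n) (α β : ℕ → ℝ)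
    (hα : ∀ j : ℕ, α j = π / j + 2 ^ (n j + 1) * π)
    (hβ : ∀ j : ℕ, β j = π / j + 3 * 2 ^ (n j) * π)
    (j k : ℕ) (hj : j.Prime) (hk : k.Prime) (hj3 : 3 ≤ j) (hk3 : 3 ≤ k) (N : ℕ) :
    Complex.exp ((2 : ℂ) ^ (-(N : ℤ)) * (α j : ℂ) * Complex.I) =
        -Complex.exp ((2 : ℂ) ^ (-(N : ℤ)) * (β k : ℂ) * Complex.I) ↔
      (j = k ∧ N = n j) := by
  rw [exp_eq_neg_exp_iff']
  constructor
  · rintro ⟨m, hm⟩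
    -- cancel I
    have h2 : (2:ℂ) ^ (-(N:ℤ)) * (α j : ℂ) =
        (2:ℂ) ^ (-(N:ℤ)) * (β k : ℂ) + π + m * (2 * π) :=
      mul_right_cancel₀ Complex.I_ne_zero (by linear_combination hm)
    have h3 : (2:ℝ) ^ (-(N:ℤ)) * α j = (2:ℝ) ^ (-(N:ℤ)) * β k + π + m * (2 * π) := by
      apply Complex.ofReal_injective
      push_cast
      linear_combination h2
    rw [hα j, hβ k, zpow_neg, zpow_natCast] at h3
    have hN : ((2:ℝ)^N) ≠ 0 := by positivity
    have key : (2:ℝ)^N * ((2:ℝ)^N)⁻¹ = 1 := mul_inv_cancel₀ hN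
    have h4 : π/(j:ℝ) + 2^(n j+1)*π = π/k + 3*2^(n k)*π + 2^N*(1+2*m)*π := by
      linear_combination (2:ℝ)^N * h3 -
        (π/(j:ℝ) + 2^(n j+1)*π - π/(k:ℝ) - 3*2^(n k)*π) * key
    have h5 : (1:ℝ)/j + 2^(n j+1) = 1/k + 3*2^(n k) + 2^N*(1+2*m) :=
      mul_right_cancel₀ pi_ne_zero (by linear_combination h4)
    have hjpos : (0:ℝ) < j := by
      have h : 0 < j := by omega
      exact_mod_cast h
    have hkpos : (0:ℝ) < k := by
      have h : 0 < k := by omega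
      exact_mod_cast h
    have hj3R : (3:ℝ) ≤ j := by exact_mod_cast hj3
    have hk3R : (3:ℝ) ≤ k := by exact_mod_cast hk3
    have ht : (1:ℝ)/j - 1/k = ((3*2^(n k) + 2^N*(1+2*m) - 2^(n j+1) : ℤ) : ℝ) := by
      push_cast
      linarith [h5]
    have hjinv : (1:ℝ)/j ≤ 1/3 := by
      rw [div_le_div_iff₀ hjpos (by norm_num)]; linarith
    have hkinv : (1:ℝ)/k ≤ 1/3 := by
      rw [div_le_div_iff₀ hkpos (by norm_num)]; linarith
    have hjinv0 : (0:ℝ) < 1/j := by positivity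
    have hkinv0 : (0:ℝ) < 1/k := by positivity
    have h1 : ((3*2^(n k) + 2^N*(1+2*m) - 2^(n j+1) : ℤ) : ℝ) < 1 := by linarith [ht]
    have h2' : (-1:ℝ) < ((3*2^(n k) + 2^N*(1+2*m) - 2^(n j+1) : ℤ) : ℝ) := by linarith [ht]
    have h1' : (3*2^(n k) + 2^N*(1+2*m) - 2^(n j+1) : ℤ) < 1 := by exact_mod_cast h1
    have h2'' : (-1 : ℤ) < 3*2^(n k) + 2^N*(1+2*m) - 2^(n j+1) := by exact_mod_cast h2'
    have ht0 : (3*2^(n k) + 2^N*(1+2*m) - 2^(n j+1) : ℤ) = 0 := by omega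
    have ht0R : ((3*2^(n k) + 2^N*(1+2*m) - 2^(n j+1) : ℤ) : ℝ) = 0 := by
      exact_mod_cast ht0
    have h6 : (1:ℝ)/j = 1/k := by linarith [ht, ht0R]
    have hjk : (j:ℝ) = k := by
      rw [div_eq_div_iff hjpos.ne' hkpos.ne'] at h6
      linarith
    have hjk' : j = k := by exact_mod_cast hjk
    subst hjk'
    refine ⟨rfl, ?_⟩
    -- now derive integer equation
    have hr : ((2:ℤ)^(n j+1) : ℝ) = ((3*2^(n j) + 2^N*(1+2*m) : ℤ) : ℝ) := by
      push_cast
      linarith [h5]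
    have hz : (2:ℤ)^(n j+1) = 3*2^(n j) + 2^N*(1+2*m) := by exact_mod_cast hr
    set c : ℤ := -(1+2*m) with hc_def
    have hc : (2:ℤ)^(n j) = 2^N * c := by
      have hps : (2:ℤ)^(n j + 1) = 2^(n j) * 2 := pow_succ 2 (n j)
      rw [hc_def]
      linarith [hz, hps]
    have hpow2 : ∀ s : ℕ, (0:ℤ) < 2^s := fun s => pow_pos (by norm_num) s
    have hcpos : 0 < c := by
      rcases le_or_gt c 0 with h | h
      · nlinarith [hpow2 (n j), hpow2 N]
      · exact h
    have hNle : N ≤ n j := by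
      by_contra hlt
      push_neg at hlt
      have hlt2 : (2:ℤ)^(n j) < 2^N := by
        apply pow_lt_pow_right₀ (by norm_num) hlt
      nlinarith [hpow2 N, hpow2 (n j)]
    have hcval : c = 2^(n j - N) := by
      have heq : (2:ℤ)^(n j) = 2^N * 2^(n j - N) := by
        rw [← pow_add]; congr 1; omega
      have h2N0 : ((2:ℤ)^N) ≠ 0 := by positivity
      exact mul_left_cancel₀ h2N0 (hc.symm.trans heq)
    by_contra hne
    have hdvd2 : (2:ℤ) ∣ c := by
      rw [hcval]; exact dvd_pow_self 2 (by omega)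
    obtain ⟨d, hd⟩ := hdvd2
    omega
  · rintro ⟨rfl, rfl⟩
    refine ⟨-1, ?_⟩
    rw [hα j, hβ j]
    have key : (2:ℂ)^(-(n j : ℤ)) * 2^(n j) = 1 := by
      rw [← zpow_natCast (2:ℂ) (n j), ← zpow_add₀ (two_ne_zero)]
      simp
    push_cast
    linear_combination -(π : ℂ) * Complex.I * key
end
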